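/- For any DMC W with finite input alphabet X and finite output alphabet Y, and any s ∈ (0, 1/2), define β(s) = min over input pairs (x, x̃) of ∑_y W(y|x)^{1−s} W(y|x̃)^{s}. Then for any length-n error-free feedback code with two equiprobable messages, the erasure probability satisfies P_era ≥ (1/2)·β(s)^n. Consequently P_era(2, n, 1) ≥ (1/2)·(sup_{s∈(0,1/2)} β(s))^n. -/

import Mathlib

open scoped BigOperators

/-- A fixed-length block code over input alphabet `X`, output alphabet `Y`, with
noiseless delay-free feedback, `M` messages, block length `n`, randomized decoding
with lists of size at most `L` and an erasure option (`none`). -/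
structure FBCode (X Y : Type) [Fintype X] [Fintype Y] (M n L : ℕ) where
  enc : Fin M → (t : Fin n) → (Fin t.1 → Y) → X
  dec : (Fin n → Y) → Option (Finset (Fin M)) → ℝ
  dec_nonneg : ∀ y o, 0 ≤ dec y o
  dec_sum : ∀ y, ∑ o : Option (Finset (Fin M)), dec y o = 1
  dec_size : ∀ y S, dec y (some S) ≠ 0 → S.card ≤ L

namespace FBCode

variable {X Y : Type} [Fintype X] [Fintype Y]

/-- Probability of observing output sequence `y` when message `m` is sent over the DMC `W`. -/
noncomputable def outProb (W : X → Y → ℝ) {M n L : ℕ} (c : FBCode X Y M n L)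
    (m : Fin M) (y : Fin n → Y) : ℝ :=
  ∏ t : Fin n, W (c.enc m t (fun i => y ⟨i.1, lt_trans i.2 t.2⟩)) (y t)

/-- Erasure probability of the code, uniform prior on messages. -/
noncomputable def Pera (W : X → Y → ℝ) {M n L : ℕ} (c : FBCode X Y M n L) : ℝ :=
  (M : ℝ)⁻¹ * ∑ m : Fin M, ∑ y : Fin n → Y, outProb W c m y * c.dec y none

/-- (Undetected) error probability of the code, uniform prior on messages. -/
noncomputable def Perr (W : X → Y → ℝ) {M n L : ℕ} (c : FBCode X Y M n L) : ℝ :=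
  (M : ℝ)⁻¹ * ∑ m : Fin M, ∑ y : Fin n → Y,
    outProb W c m y * ∑ S : Finset (Fin M), if m ∈ S then 0 else c.dec y (some S)

end FBCode

/-- Minimum error probability of length-`n` feedback codes with `M` equiprobable
messages, list size `L`, erasure probability at most `p`. -/
noncomputable def PeMin {X Y : Type} [Fintype X] [Fintype Y] (W : X → Y → ℝ)
    (M n L : ℕ) (p : ℝ) : ℝ :=
  sInf {e | ∃ c : FBCode X Y M n L, FBCode.Pera W c ≤ p ∧ FBCode.Perr W c = e}

/-- Minimum erasure probability of length-`n` error-free feedback codes with `M`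
equiprobable messages and list size `L`. -/
noncomputable def PeraMin {X Y : Type} [Fintype X] [Fintype Y] (W : X → Y → ℝ)
    (M n L : ℕ) : ℝ :=
  sInf {r | ∃ c : FBCode X Y M n L, FBCode.Perr W c = 0 ∧ FBCode.Pera W c = r}

open Finset

/-! An error-free decoder for two messages must erase every output sequence `y` that both
messages can produce, so `2 P_era ≥ ∑_y P₀(y)^{1-s} P₁(y)^s` by `a^{1-s} b^s ≤ a + b`. With
feedback the inputs at time `t` depend on the past outputs, but summing out the last output
first bounds each factor of this Chernoff sum by `β(s)`, whatever the past, giving `β(s)^n`. -/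

theorem Fin.sum_pi_succ_eq_sum_snoc {Y R : Type*} [Fintype Y] [AddCommMonoid R] {n : ℕ}
    (F : (Fin (n + 1) → Y) → R) :
    ∑ y, F y = ∑ z : Fin n → Y, ∑ a, F (Fin.snoc z a) := by
  rw [← (Fin.snocEquiv fun _ => Y).sum_comp, Fintype.sum_prod_type, sum_comm]
  rfl

theorem pow_le_sum_prod_of_le_sum {Y : Type*} [Fintype Y] {β : ℝ} (hβ : 0 ≤ β) :
    ∀ {n : ℕ} (g : (t : Fin n) → (Fin t → Y) → Y → ℝ), (∀ t p y, 0 ≤ g t p y) →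
      (∀ t p, β ≤ ∑ y, g t p y) →
      β ^ n ≤ ∑ y : Fin n → Y, ∏ t : Fin n, g t (fun i => y ⟨i, i.2.trans t.2⟩) (y t)
  | 0, g, _, _ => by simp
  | n + 1, g, hg, hβg => by
    set P : (Fin n → Y) → ℝ := fun z =>
      ∏ t : Fin n, g t.castSucc (fun i => z ⟨i, i.2.trans t.2⟩) (z t)
    have hP : β ^ n ≤ ∑ z, P z :=
      pow_le_sum_prod_of_le_sum hβ _ (fun _ _ _ => hg _ _ _) (fun _ _ => hβg _ _)
    have hsnoc (z : Fin n → Y) (a : Y) :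
        ∏ t : Fin (n + 1), g t (fun i => Fin.snoc (α := fun _ => Y) z a ⟨i, i.2.trans t.2⟩)
          (Fin.snoc (α := fun _ => Y) z a t) = P z * g (Fin.last n) z a := by
      rw [Fin.prod_univ_castSucc]
      simp only [Fin.snoc_castSucc, Fin.snoc_last]
      congr 1
      · refine prod_congr rfl fun t _ => congrArg₂ _ (funext fun i => ?_) rfl
        exact Fin.snoc_castSucc (i := ⟨i, i.2.trans t.2⟩) ..
      · exact congrArg₂ _ (funext fun i => Fin.snoc_castSucc (i := i) ..) rfl
    calc β ^ (n + 1) ≤ (∑ z, P z) * β := by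
          rw [pow_succ]; exact mul_le_mul_of_nonneg_right hP hβ
      _ ≤ ∑ z, P z * ∑ a, g (Fin.last n) z a := by
        rw [sum_mul]
        exact sum_le_sum fun z _ =>
          mul_le_mul_of_nonneg_left (hβg _ _) (prod_nonneg fun _ _ => hg _ _ _)
      _ = _ := by simp_rw [Fin.sum_pi_succ_eq_sum_snoc, hsnoc, mul_sum]

theorem Real.rpow_one_sub_mul_rpow_le_add {a b s : ℝ} (ha : 0 ≤ a) (hb : 0 ≤ b) (hs₀ : 0 ≤ s)
    (hs₁ : s ≤ 1) : a ^ (1 - s) * b ^ s ≤ a + b := by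
  have := Real.geom_mean_le_arith_mean2_weighted (sub_nonneg.2 hs₁) hs₀ ha hb (sub_add_cancel 1 s)
  nlinarith [mul_nonneg hs₀ ha, mul_nonneg (sub_nonneg.2 hs₁) hb]

section Chernoff

variable {X Y : Type} [Fintype Y] {W : X → Y → ℝ}

noncomputable def minChernoffCoeff (W : X → Y → ℝ) (s : ℝ) : ℝ :=
  ⨅ p : X × X, ∑ y, W p.1 y ^ (1 - s) * W p.2 y ^ s

theorem minChernoffCoeff_le [Finite X] (W : X → Y → ℝ) (s : ℝ) (x x' : X) :
    minChernoffCoeff W s ≤ ∑ y, W x y ^ (1 - s) * W x' y ^ s :=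
  ciInf_le (Set.finite_range _).bddBelow (x, x')

theorem minChernoffCoeff_nonneg (hW0 : ∀ x y, 0 ≤ W x y) (s : ℝ) : 0 ≤ minChernoffCoeff W s :=
  Real.iInf_nonneg fun _ => sum_nonneg fun _ _ =>
    mul_nonneg (Real.rpow_nonneg (hW0 _ _) _) (Real.rpow_nonneg (hW0 _ _) _)

end Chernoff

namespace FBCode

variable {X Y : Type} [Fintype X] [Fintype Y] {W : X → Y → ℝ} {M n L : ℕ}

theorem outProb_nonneg (hW0 : ∀ x y, 0 ≤ W x y) (c : FBCode X Y M n L) (m : Fin M)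
    (y : Fin n → Y) : 0 ≤ outProb W c m y :=
  prod_nonneg fun _ _ => hW0 _ _

theorem outProb_rpow_one_sub_mul_rpow (hW0 : ∀ x y, 0 ≤ W x y) (c : FBCode X Y M n L)
    (m m' : Fin M) (s : ℝ) (y : Fin n → Y) :
    outProb W c m y ^ (1 - s) * outProb W c m' y ^ s =
      ∏ t : Fin n, W (c.enc m t fun i => y ⟨i, i.2.trans t.2⟩) (y t) ^ (1 - s) *
        W (c.enc m' t fun i => y ⟨i, i.2.trans t.2⟩) (y t) ^ s := by
  rw [outProb, outProb, ← Real.finsetProd_rpow _ _ fun _ _ => hW0 _ _,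
    ← Real.finsetProd_rpow _ _ fun _ _ => hW0 _ _, prod_mul_distrib]

theorem minChernoffCoeff_pow_le_sum (hW0 : ∀ x y, 0 ≤ W x y) (c : FBCode X Y M n L)
    (m m' : Fin M) (s : ℝ) :
    minChernoffCoeff W s ^ n ≤ ∑ y, outProb W c m y ^ (1 - s) * outProb W c m' y ^ s := by
  simp_rw [outProb_rpow_one_sub_mul_rpow hW0]
  exact pow_le_sum_prod_of_le_sum (minChernoffCoeff_nonneg hW0 s)
    (fun t p y => W (c.enc m t p) y ^ (1 - s) * W (c.enc m' t p) y ^ s)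
    (fun _ _ _ => mul_nonneg (Real.rpow_nonneg (hW0 _ _) _) (Real.rpow_nonneg (hW0 _ _) _))
    (fun _ _ => minChernoffCoeff_le W s _ _)

theorem mem_of_perr_eq_zero (hW0 : ∀ x y, 0 ≤ W x y) {c : FBCode X Y M n L} (hc : Perr W c = 0)
    {m : Fin M} {y : Fin n → Y} {S : Finset (Fin M)} (hm : outProb W c m y ≠ 0)
    (hS : c.dec y (some S) ≠ 0) : m ∈ S := by
  have hmiss_nonneg : ∀ m y S, 0 ≤ if m ∈ S then 0 else c.dec y (some S) := fun _ _ _ => by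
    split_ifs
    exacts [le_rfl, c.dec_nonneg _ _]
  have hterm_nonneg : ∀ m y, 0 ≤ outProb W c m y *
      ∑ S, if m ∈ S then 0 else c.dec y (some S) := fun m y =>
    mul_nonneg (outProb_nonneg hW0 c m y) (sum_nonneg fun _ _ => hmiss_nonneg m y _)
  have hsum : ∑ m, ∑ y, outProb W c m y * ∑ S, (if m ∈ S then 0 else c.dec y (some S)) = 0 := by
    have hM : (M : ℝ)⁻¹ ≠ 0 := inv_ne_zero (Nat.cast_ne_zero.2 (NeZero.of_pos m.pos).out)
    exact (mul_eq_zero.1 hc).resolve_left hM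
  rw [Fintype.sum_eq_zero_iff_of_nonneg fun m => sum_nonneg fun y _ => hterm_nonneg m y] at hsum
  have hterm :=
    congrFun ((Fintype.sum_eq_zero_iff_of_nonneg (hterm_nonneg m)).1 (congrFun hsum m)) y
  have hmiss := congrFun ((Fintype.sum_eq_zero_iff_of_nonneg (hmiss_nonneg m y)).1
    ((mul_eq_zero.1 hterm).resolve_left hm)) S
  by_contra hmS
  exact hS (by simpa [hmS] using hmiss)

theorem dec_none_eq_one_of_perr_eq_zero (hW0 : ∀ x y, 0 ≤ W x y) {c : FBCode X Y M n 1}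
    (hc : Perr W c = 0) {m m' : Fin M} (hmm' : m ≠ m') {y : Fin n → Y}
    (hm : outProb W c m y ≠ 0) (hm' : outProb W c m' y ≠ 0) : c.dec y none = 1 := by
  have hlist : ∀ S, c.dec y (some S) = 0 := fun S => by
    by_contra hS
    exact hmm' (card_le_one.1 (c.dec_size y S hS) m (mem_of_perr_eq_zero hW0 hc hm hS) m'
      (mem_of_perr_eq_zero hW0 hc hm' hS))
  simpa [Fintype.sum_option, hlist] using c.dec_sum y

theorem pera_two (c : FBCode X Y 2 n L) :
    Pera W c = 2⁻¹ * ∑ y, (outProb W c 0 y + outProb W c 1 y) * c.dec y none := by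
  simp [Pera, Fin.sum_univ_two, ← sum_add_distrib, add_mul]

theorem outProb_rpow_one_sub_mul_rpow_le (hW0 : ∀ x y, 0 ≤ W x y) {c : FBCode X Y 2 n 1}
    (hc : Perr W c = 0) {s : ℝ} (hs : s ∈ Set.Ioo 0 1) (y : Fin n → Y) :
    outProb W c 0 y ^ (1 - s) * outProb W c 1 y ^ s ≤
      (outProb W c 0 y + outProb W c 1 y) * c.dec y none := by
  obtain ⟨hs₀, hs₁⟩ := hs
  have hP₀ := outProb_nonneg hW0 c 0 y
  have hP₁ := outProb_nonneg hW0 c 1 y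
  have hd := c.dec_nonneg y none
  by_cases h₀ : outProb W c 0 y = 0
  · rw [h₀, Real.zero_rpow (by linarith), zero_mul]; positivity
  by_cases h₁ : outProb W c 1 y = 0
  · rw [h₁, Real.zero_rpow hs₀.ne', mul_zero]; positivity
  rw [dec_none_eq_one_of_perr_eq_zero hW0 hc zero_ne_one h₀ h₁, mul_one]
  exact Real.rpow_one_sub_mul_rpow_le_add hP₀ hP₁ hs₀.le hs₁.le

theorem half_minChernoffCoeff_pow_le_pera (hW0 : ∀ x y, 0 ≤ W x y) {c : FBCode X Y 2 n 1}
    (hc : Perr W c = 0) {s : ℝ} (hs : s ∈ Set.Ioo 0 1) :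
    1 / 2 * minChernoffCoeff W s ^ n ≤ Pera W c := by
  rw [pera_two, one_div]
  gcongr
  exact (minChernoffCoeff_pow_le_sum hW0 c 0 1 s).trans
    (sum_le_sum fun y _ => outProb_rpow_one_sub_mul_rpow_le hW0 hc hs y)

theorem exists_perr_eq_zero [Nonempty X] (W : X → Y → ℝ) : ∃ c : FBCode X Y M n L, Perr W c = 0 :=
  ⟨⟨fun _ _ _ => Classical.arbitrary X, fun _ o => if o = none then 1 else 0,
    fun _ _ => by split_ifs <;> norm_num, fun _ => by simp,
    fun _ _ h => by simp at h⟩, by simp [Perr]⟩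

end FBCode

theorem pera_ge_half_beta_pow_general {X Y : Type} [Fintype X] [Fintype Y] [Nonempty X]
    (W : X → Y → ℝ) (hW0 : ∀ x y, 0 ≤ W x y) (n : ℕ) :
    (∀ s ∈ Set.Ioo (0 : ℝ) (1 / 2), ∀ c : FBCode X Y 2 n 1, FBCode.Perr W c = 0 →
      (1 / 2) * (⨅ p : X × X, ∑ y, W p.1 y ^ (1 - s) * W p.2 y ^ s) ^ n
        ≤ FBCode.Pera W c) ∧
    (1 / 2) * (⨆ s : Set.Ioo (0 : ℝ) (1 / 2),
        ⨅ p : X × X, ∑ y, W p.1 y ^ (1 - (s : ℝ)) * W p.2 y ^ (s : ℝ)) ^ n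
      ≤ PeraMin (X := X) (Y := Y) W 2 n 1 := by
  have hIoo : Set.Ioo (0 : ℝ) (1 / 2) ⊆ Set.Ioo 0 1 := Set.Ioo_subset_Ioo_right (by norm_num)
  have hbound : ∀ s ∈ Set.Ioo (0 : ℝ) (1 / 2), ∀ c : FBCode X Y 2 n 1, FBCode.Perr W c = 0 →
      1 / 2 * minChernoffCoeff W s ^ n ≤ FBCode.Pera W c := fun s hs _ hc =>
    FBCode.half_minChernoffCoeff_pow_le_pera hW0 hc (hIoo hs)
  refine ⟨hbound, ?_⟩
  change 1 / 2 * (⨆ s : Set.Ioo (0 : ℝ) (1 / 2), minChernoffCoeff W s) ^ n ≤ _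
  have : Nonempty (Set.Ioo (0 : ℝ) (1 / 2)) := ⟨⟨1 / 4, by norm_num, by norm_num⟩⟩
  rw [Real.iSup_pow fun _ => minChernoffCoeff_nonneg hW0 _, Real.mul_iSup_of_nonneg (by norm_num)]
  obtain ⟨c₀, hc₀⟩ := FBCode.exists_perr_eq_zero (M := 2) (n := n) (L := 1) W
  refine le_csInf ⟨_, c₀, hc₀, rfl⟩ ?_
  rintro _ ⟨c, hc, rfl⟩
  exact ciSup_le fun s => hbound s s.2 c hc

/-- for every `s ∈ (0,1/2)`, every length-`n` error-free feedback
code with two equiprobable messages has erasure probability at least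
`(1/2)·β(s)^n`, where `β(s) = min_{x,x̃} ∑_y W(y|x)^{1−s} W(y|x̃)^s`;
consequently `P_era(2,n,1) ≥ (1/2)·(sup_{s∈(0,1/2)} β(s))^n`. -/
theorem pera_ge_half_beta_pow {X Y : Type} [Fintype X] [Fintype Y] [Nonempty X]
    (W : X → Y → ℝ) (hW0 : ∀ x y, 0 ≤ W x y) (hW1 : ∀ x, ∑ y, W x y = 1) (n : ℕ) :
    (∀ s ∈ Set.Ioo (0 : ℝ) (1 / 2), ∀ c : FBCode X Y 2 n 1, FBCode.Perr W c = 0 →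
      (1 / 2) * (⨅ p : X × X, ∑ y, W p.1 y ^ (1 - s) * W p.2 y ^ s) ^ n
        ≤ FBCode.Pera W c) ∧
    (1 / 2) * (⨆ s : Set.Ioo (0 : ℝ) (1 / 2),
        ⨅ p : X × X, ∑ y, W p.1 y ^ (1 - (s : ℝ)) * W p.2 y ^ (s : ℝ)) ^ n
      ≤ PeraMin (X := X) (Y := Y) W 2 n 1 :=
  pera_ge_half_beta_pow_general W hW0 n
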